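/- arXiv:cs/0506059 — 3 statements merged into one kernel-verified Lean document; each statement's English description precedes it below -/
import Mathlib

section
/- Let B and B′ be relational structures over the same vocabulary, h : B → B′ and h′ : B′ → B homomorphisms. Let φ be a quantified formula with extended constraints over B, and let φ′ be obtained by replacing each relation R^B with R^{B′} (keeping universal variables ranging over the universe of B). If {σ_x} is a winning strategy for φ, then {h ∘ σ_x} is a winning strategy for φ′; and if {σ′_x} is a winning strategy for φ′, then {h′ ∘ σ′_x} is a winning strategy for φ. -/
/-- A relational structure over a vocabulary `σ` with arity function `ar`. -/
structure RelStruct (σ : Type*) (ar : σ → ℕ) where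
  carrier : Type*
  rel : ∀ s : σ, Set (Fin (ar s) → carrier)

/-- A homomorphism between relational structures. -/
def IsHom {σ : Type*} {ar : σ → ℕ} (A B : RelStruct σ ar)
    (h : A.carrier → B.carrier) : Prop :=
  ∀ (s : σ) (t : Fin (ar s) → A.carrier), t ∈ A.rel s → (fun i => h (t i)) ∈ B.rel s

/-- An extended constraint: `(y₁=d₁)∧⋯∧(y_m=d_m) ⇒ R(x₁,…,x_k)`, where the
universal variables come from `Y` (with values in `U`), the existential
variables come from `X`, and `R` is named by a relation symbol of `σ`. -/
structure ExtConstraint (σ : Type*) (ar : σ → ℕ) (Y X U : Type*) where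
  conds : List (Y × U)
  sym : σ
  vars : Fin (ar sym) → X

/-- A strategy `strat` (assigning to each existential variable a function of the
universal assignments, depending only on the universals preceding it, as given
by `pre`) is winning for the formula with extended constraints `C` interpreted
in the structure `B`, universal variables ranging over `U`. -/
def WinningStrategy {σ : Type*} {ar : σ → ℕ} {Y X U : Type*}
    (B : RelStruct σ ar) (pre : X → Set Y)
    (C : List (ExtConstraint σ ar Y X U))
    (strat : X → (Y → U) → B.carrier) : Prop :=
  (∀ x (τ τ' : Y → U), (∀ y ∈ pre x, τ y = τ' y) → strat x τ = strat x τ') ∧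
  ∀ τ : Y → U, ∀ c ∈ C, (∀ p ∈ c.conds, τ p.1 = p.2) →
    (fun i => strat (c.vars i) τ) ∈ B.rel c.sym

theorem winning_strategy_transfer_hom_equivalent
    {σ : Type*} {ar : σ → ℕ} {Y X : Type*}
    (B B' : RelStruct σ ar)
    (h : B.carrier → B'.carrier) (h' : B'.carrier → B.carrier)
    (hh : IsHom B B' h) (hh' : IsHom B' B h')
    (pre : X → Set Y)
    -- the constraints of φ (and of φ', which has the same symbols and
    -- variables, universal variables still ranging over the universe of B)
    (C : List (ExtConstraint σ ar Y X B.carrier)) :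
    -- if {σ_x} is winning for φ then {h ∘ σ_x} is winning for φ'
    (∀ strat : X → (Y → B.carrier) → B.carrier,
      WinningStrategy B pre C strat →
      WinningStrategy B' pre C (fun x τ => h (strat x τ))) ∧
    -- if {σ'_x} is winning for φ' then {h' ∘ σ'_x} is winning for φ
    (∀ strat' : X → (Y → B.carrier) → B'.carrier,
      WinningStrategy B' pre C strat' →
      WinningStrategy B pre C (fun x τ => h' (strat' x τ))) := by
  constructor
  · rintro strat ⟨hdep, hsat⟩
    exact ⟨fun x τ τ' hp => by simp only [hdep x τ τ' hp],
      fun τ c hc hcond => hh c.sym _ (hsat τ c hc hcond)⟩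
  · rintro strat ⟨hdep, hsat⟩
    exact ⟨fun x τ τ' hp => by simp only [hdep x τ τ' hp],
      fun τ c hc hcond => hh' c.sym _ (hsat τ c hc hcond)⟩
end

section
/- Let Γ be a constraint language over a finite domain D with a hard idempotent set function polymorphism f (i.e., f has two disjoint coherent sets C₀, C₁), and let C be a coherent set with C ≠ D and c_t ∈ C. For an extended Horn clause l₁ ∨ ⋯ ∨ l_k (at most one positive existential literal), define the constraint M = m₁ ∨ ⋯ ∨ m_k where: m_i = (y ∉ C₀) if l_i = y universal; m_i = (y ∉ C₁) if l_i = ¬y universal; m_i = (x = c_t) if l_i = x existential; m_i = (x ∉ C) if l_i = ¬x existential. Then the relation defined by M over D is invariant under f: for any assignments a₁,…,a_n each satisfying M, the assignment a(v) = f({a₁(v),…,a_n(v)}) also satisfies M. -/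
/-- A literal of an extended Horn clause: a variable, whether it occurs
positively, and whether it is universally quantified. -/
structure HornLit (V : Type*) where
  var : V
  pos : Bool
  univ : Bool

/-- Satisfaction of the translated disjunct `m_i` corresponding to a literal,
with respect to coherent sets `C₀`, `C₁`, `C` and the element `c_t`. -/
def LitSat {D V : Type*} (C0 C1 C : Set D) (ct : D)
    (a : V → D) (l : HornLit V) : Prop :=
  match l.univ, l.pos with
  | true,  true  => a l.var ∉ C0      -- positive universal literal y : (y ∉ C₀)
  | true,  false => a l.var ∉ C1      -- negative universal literal ¬y : (y ∉ C₁)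
  | false, true  => a l.var = ct      -- positive existential literal x : (x = c_t)
  | false, false => a l.var ∉ C       -- negative existential literal ¬x : (x ∉ C)

/-- The constraint `M = m₁ ∨ ⋯ ∨ m_k` obtained from the clause `L`. -/
def ClauseSat {D V : Type*} (C0 C1 C : Set D) (ct : D)
    (a : V → D) (L : List (HornLit V)) : Prop :=
  ∃ l ∈ L, LitSat C0 C1 C ct a l

/-! If one of the `aᵢ` satisfies a disjunct `mᵢ` of the form `x ∉ S` with `S` coherent, then so
does the image, since `f A ∈ S` would force `A ⊆ S`. Otherwise every `aᵢ` satisfies a disjunct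
`x = c_t`, and there is only one such disjunct, so the image takes the value `f {c_t} = c_t`
there. -/

theorem List.eq_of_mem_of_length_le_one {α : Type*} {l : List α} (h : l.length ≤ 1) {x y : α}
    (hx : x ∈ l) (hy : y ∈ l) : x = y := by
  rcases l with _ | ⟨z, _ | ⟨w, t⟩⟩ <;> simp_all

theorem apply_notMem_of_coherent {D : Type*} {f : {S : Set D // S.Nonempty} → D} {S : Set D}
    (hS : ∀ A : {S : Set D // S.Nonempty}, f A ∈ S → A.1 ⊆ S) {A : {S : Set D // S.Nonempty}}
    {d : D} (hdA : d ∈ A.1) (hdS : d ∉ S) : f A ∉ S :=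
  fun hfA => hdS (hS A hfA hdA)

theorem apply_eq_of_subset_singleton {D : Type*} {f : {S : Set D // S.Nonempty} → D}
    (hidem : ∀ d : D, f ⟨{d}, Set.singleton_nonempty d⟩ = d) {A : {S : Set D // S.Nonempty}}
    {c : D} (hA : A.1 ⊆ {c}) : f A = c := by
  obtain ⟨S, hS⟩ := A
  obtain rfl : S = {c} := hS.subset_singleton_iff.1 hA
  exact hidem c

namespace HornLit

variable {D V : Type*}

def isPosExist (l : HornLit V) : Bool :=
  l.pos && !l.univ

theorem eq_of_isPosExist {L : List (HornLit V)} (hhorn : (L.filter isPosExist).length ≤ 1)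
    {l l' : HornLit V} (hl : l ∈ L) (hl' : l' ∈ L) (hpos : l.isPosExist) (hpos' : l'.isPosExist) :
    l = l' :=
  List.eq_of_mem_of_length_le_one hhorn (List.mem_filter.2 ⟨hl, hpos⟩)
    (List.mem_filter.2 ⟨hl', hpos'⟩)

theorem litSat_iff_of_isPosExist {C0 C1 C : Set D} {ct : D} {a : V → D} {l : HornLit V}
    (hpos : l.isPosExist) : LitSat C0 C1 C ct a l ↔ a l.var = ct := by
  obtain ⟨v, _ | _, _ | _⟩ := l <;> simp_all [isPosExist, LitSat]

theorem litSat_apply_of_not_isPosExist {f : {S : Set D // S.Nonempty} → D} {C0 C1 C : Set D}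
    (hC0 : ∀ A : {S : Set D // S.Nonempty}, f A ∈ C0 → A.1 ⊆ C0)
    (hC1 : ∀ A : {S : Set D // S.Nonempty}, f A ∈ C1 → A.1 ⊆ C1)
    (hC : ∀ A : {S : Set D // S.Nonempty}, f A ∈ C → A.1 ⊆ C) {ct : D} {l : HornLit V}
    (hpos : l.isPosExist = false) {b : V → D} {A : V → {S : Set D // S.Nonempty}}
    (hbA : ∀ v, b v ∈ (A v).1) (hb : LitSat C0 C1 C ct b l) :
    LitSat C0 C1 C ct (fun v => f (A v)) l := by
  obtain ⟨v, _ | _, _ | _⟩ := l <;> simp only [isPosExist, LitSat] at hpos hb ⊢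
  · exact apply_notMem_of_coherent hC (hbA v) hb
  · exact apply_notMem_of_coherent hC1 (hbA v) hb
  · simp at hpos
  · exact apply_notMem_of_coherent hC0 (hbA v) hb

end HornLit

theorem extended_horn_clause_invariant_under_set_function_general
    (D : Type*)
    (f : {S : Set D // S.Nonempty} → D)
    -- f is an idempotent set function
    (hidem : ∀ d : D, f ⟨{d}, Set.singleton_nonempty d⟩ = d)
    (C0 C1 C : Set D)
    -- C₀, C₁ are disjoint coherent sets (f is hard)
    (hC0 : C0.Nonempty ∧ ∀ A : {S : Set D // S.Nonempty}, f A ∈ C0 → A.1 ⊆ C0)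
    (hC1 : C1.Nonempty ∧ ∀ A : {S : Set D // S.Nonempty}, f A ∈ C1 → A.1 ⊆ C1)
    -- C is a coherent set, C ≠ D, with c_t ∈ C
    (hC : C.Nonempty ∧ ∀ A : {S : Set D // S.Nonempty}, f A ∈ C → A.1 ⊆ C)
    (ct : D)
    (V : Type*) (L : List (HornLit V))
    -- L is an extended Horn clause: at most one positive existential literal
    (hhorn : (L.filter (fun l => l.pos && !l.univ)).length ≤ 1)
    -- a₁, …, a_n are assignments, each satisfying M
    (n : ℕ) (hn : 0 < n) (a : Fin n → V → D)
    (hsat : ∀ i, ClauseSat C0 C1 C ct (a i) L) :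
    -- the pointwise f-image assignment also satisfies M
    ClauseSat C0 C1 C ct
      (fun v => f ⟨Set.range (fun i : Fin n => a i v),
        ⟨a ⟨0, hn⟩ v, ⟨0, hn⟩, rfl⟩⟩) L := by
  by_cases hkept : ∃ l ∈ L, l.isPosExist = false ∧ ∃ i, LitSat C0 C1 C ct (a i) l
  · obtain ⟨l, hlL, hpos, i, hi⟩ := hkept
    exact ⟨l, hlL, HornLit.litSat_apply_of_not_isPosExist hC0.2 hC1.2 hC.2 hpos
      (fun v => ⟨i, rfl⟩) hi⟩
  have hpos_of_sat : ∀ i, ∀ l ∈ L, LitSat C0 C1 C ct (a i) l → l.isPosExist := fun i l hlL hi =>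
    Bool.eq_true_of_not_eq_false fun hpos => hkept ⟨l, hlL, hpos, i, hi⟩
  obtain ⟨l₀, hl₀L, h₀⟩ := hsat ⟨0, hn⟩
  have hpos₀ := hpos_of_sat _ l₀ hl₀L h₀
  have hall : ∀ i, a i l₀.var = ct := fun i => by
    obtain ⟨l, hlL, hi⟩ := hsat i
    obtain rfl := HornLit.eq_of_isPosExist hhorn hlL hl₀L (hpos_of_sat i l hlL hi) hpos₀
    exact (HornLit.litSat_iff_of_isPosExist hpos₀).1 hi
  refine ⟨l₀, hl₀L, (HornLit.litSat_iff_of_isPosExist hpos₀).2 ?_⟩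
  exact apply_eq_of_subset_singleton hidem (Set.range_subset_singleton.2 (funext hall))

theorem extended_horn_clause_invariant_under_set_function
    (D : Type*) [Fintype D]
    (f : {S : Set D // S.Nonempty} → D)
    -- f is an idempotent set function
    (hidem : ∀ d : D, f ⟨{d}, Set.singleton_nonempty d⟩ = d)
    (C0 C1 C : Set D)
    -- C₀, C₁ are disjoint coherent sets (f is hard)
    (hC0 : C0.Nonempty ∧ ∀ A : {S : Set D // S.Nonempty}, f A ∈ C0 → A.1 ⊆ C0)
    (hC1 : C1.Nonempty ∧ ∀ A : {S : Set D // S.Nonempty}, f A ∈ C1 → A.1 ⊆ C1)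
    (hdisj : Disjoint C0 C1)
    -- C is a coherent set, C ≠ D, with c_t ∈ C
    (hC : C.Nonempty ∧ ∀ A : {S : Set D // S.Nonempty}, f A ∈ C → A.1 ⊆ C)
    (hCne : C ≠ Set.univ)
    (ct : D) (hct : ct ∈ C)
    (V : Type*) (L : List (HornLit V))
    -- L is an extended Horn clause: at most one positive existential literal
    (hhorn : (L.filter (fun l => l.pos && !l.univ)).length ≤ 1)
    -- a₁, …, a_n are assignments, each satisfying M
    (n : ℕ) (hn : 0 < n) (a : Fin n → V → D)
    (hsat : ∀ i, ClauseSat C0 C1 C ct (a i) L) :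
    -- the pointwise f-image assignment also satisfies M
    ClauseSat C0 C1 C ct
      (fun v => f ⟨Set.range (fun i : Fin n => a i v),
        ⟨a ⟨0, hn⟩ v, ⟨0, hn⟩, rfl⟩⟩) L :=
  extended_horn_clause_invariant_under_set_function_general D f hidem C0 C1 C hC0 hC1 hC ct V L
    hhorn n hn a hsat
end

section
/- Let φ be a 3-CNF formula over variables y₁,…,y_n, and let φ′ be the extended quantified Horn formula with prefix (∃x₁⁰∃x₁¹∀y₁)…(∃x_n⁰∃x_n¹∀y_n)∃d, core clauses: ¬x₁⁰ ∨ ¬x₁¹; (¬y_i ∨ ¬x_{i+1}⁰ ∨ ¬x_{i+1}¹ ∨ x_i¹) and (y_i ∨ ¬x_{i+1}⁰ ∨ ¬x_{i+1}¹ ∨ x_i⁰) for 1 ≤ i ≤ n−1; (¬y_n ∨ ¬d ∨ x_n¹) and (y_n ∨ ¬d ∨ x_n⁰); and for each clause l₁∨l₂∨l₃ of φ the clause l₁ ∨ l₂ ∨ l₃ ∨ d. Then φ is satisfiable if and only if φ′ is true. -/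
/-- Value of the boolean literal `(v, s)` (positive iff `s = true`) under
assignment `f`. -/
def LitVal {n : ℕ} (f : Fin n → Bool) (l : Fin n × Bool) : Prop :=
  f l.1 = l.2

/-- Truth of the extended quantified Horn formula `φ'` built from a 3-CNF
`cls` over variables `y₁,…,y_n`.  Its prefix is
`(∃x₁⁰∃x₁¹∀y₁)…(∃x_n⁰∃x_n¹∀y_n)∃d`, so a winning strategy consists of
functions `X0 i`, `X1 i` depending only on the universal variables `y_j`,
`j < i`, together with `dF` depending on all universal variables, making all
clauses of `φ'` true under every universal assignment `τ`. -/
def ExtQHornTrue (n : ℕ) (hn : 0 < n)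
    (cls : List (Fin 3 → (Fin n × Bool))) : Prop :=
  ∃ X0 X1 : Fin n → (Fin n → Bool) → Bool, ∃ dF : (Fin n → Bool) → Bool,
    -- X0 i, X1 i depend only on the universal variables preceding them
    (∀ (i : Fin n) (τ τ' : Fin n → Bool),
      (∀ j : Fin n, (j : ℕ) < (i : ℕ) → τ j = τ' j) →
      X0 i τ = X0 i τ' ∧ X1 i τ = X1 i τ') ∧
    ∀ τ : Fin n → Bool,
      -- core clause ¬x₁⁰ ∨ ¬x₁¹
      (¬ (X0 ⟨0, hn⟩ τ = true ∧ X1 ⟨0, hn⟩ τ = true)) ∧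
      -- core clauses y_i ∧ x_{i+1}⁰ ∧ x_{i+1}¹ ⇒ x_i¹ and
      --              ¬y_i ∧ x_{i+1}⁰ ∧ x_{i+1}¹ ⇒ x_i⁰, for 1 ≤ i ≤ n−1
      (∀ (i : ℕ) (h1 : i + 1 < n),
        (τ ⟨i, Nat.lt_of_succ_lt h1⟩ = true ∧
            X0 ⟨i + 1, h1⟩ τ = true ∧ X1 ⟨i + 1, h1⟩ τ = true →
          X1 ⟨i, Nat.lt_of_succ_lt h1⟩ τ = true) ∧
        (τ ⟨i, Nat.lt_of_succ_lt h1⟩ = false ∧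
            X0 ⟨i + 1, h1⟩ τ = true ∧ X1 ⟨i + 1, h1⟩ τ = true →
          X0 ⟨i, Nat.lt_of_succ_lt h1⟩ τ = true)) ∧
      -- core clauses y_n ∧ d ⇒ x_n¹ and ¬y_n ∧ d ⇒ x_n⁰
      ((τ ⟨n - 1, Nat.sub_lt hn Nat.one_pos⟩ = true ∧ dF τ = true →
          X1 ⟨n - 1, Nat.sub_lt hn Nat.one_pos⟩ τ = true) ∧
       (τ ⟨n - 1, Nat.sub_lt hn Nat.one_pos⟩ = false ∧ dF τ = true →
          X0 ⟨n - 1, Nat.sub_lt hn Nat.one_pos⟩ τ = true)) ∧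
      -- for each clause l₁ ∨ l₂ ∨ l₃ of φ, the clause l₁ ∨ l₂ ∨ l₃ ∨ d
      (∀ c ∈ cls,
        LitVal τ (c 0) ∨ LitVal τ (c 1) ∨ LitVal τ (c 2) ∨ dF τ = true)

theorem cnf_sat_iff_ext_qhorn_true
    (n : ℕ) (hn : 0 < n) (cls : List (Fin 3 → (Fin n × Bool))) :
    (∃ f : Fin n → Bool, ∀ c ∈ cls, ∃ k : Fin 3, LitVal f (c k)) ↔
      ExtQHornTrue n hn cls := by
  constructor
  · -- forward: satisfiable ⇒ formula true
    rintro ⟨f, hf⟩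
    refine ⟨fun i τ => decide (∃ j : Fin n, (j : ℕ) < (i : ℕ) ∧ τ j ≠ f j) || f i,
            fun i τ => decide (∃ j : Fin n, (j : ℕ) < (i : ℕ) ∧ τ j ≠ f j) || !(f i),
            fun τ => !decide (∀ c ∈ cls, ∃ k : Fin 3, τ (c k).1 = (c k).2),
            ?_, ?_⟩
    · intro i τ τ' hagree
      have h : (∃ j : Fin n, (j : ℕ) < (i : ℕ) ∧ τ j ≠ f j) ↔
          (∃ j : Fin n, (j : ℕ) < (i : ℕ) ∧ τ' j ≠ f j) := by
        constructor
        · rintro ⟨j, hj, hne⟩; exact ⟨j, hj, by rw [← hagree j hj]; exact hne⟩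
        · rintro ⟨j, hj, hne⟩; exact ⟨j, hj, by rw [hagree j hj]; exact hne⟩
      have hdd : decide (∃ j : Fin n, (j : ℕ) < (i : ℕ) ∧ τ j ≠ f j) =
          decide (∃ j : Fin n, (j : ℕ) < (i : ℕ) ∧ τ' j ≠ f j) := decide_eq_decide.mpr h
      exact ⟨by simp only [hdd], by simp only [hdd]⟩
    · intro τ
      have hno0 : decide (∃ j : Fin n, (j : ℕ) < ((⟨0, hn⟩ : Fin n) : ℕ) ∧ τ j ≠ f j)
          = false := by
        simp
      refine ⟨?_, ?_, ?_, ?_⟩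
      · rintro ⟨h0, h1⟩
        simp only [hno0, Bool.false_or] at h0 h1
        rw [h0] at h1; exact absurd h1 (by simp)
      · intro i h1
        constructor
        · rintro ⟨hti, hx0, hx1⟩
          have hmm : ∃ j : Fin n, (j : ℕ) < i + 1 ∧ τ j ≠ f j := by
            rcases Bool.or_eq_true_iff.mp hx0 with h | h
            · exact of_decide_eq_true h
            · rcases Bool.or_eq_true_iff.mp hx1 with h' | h'
              · exact of_decide_eq_true h'
              · simp at h'; rw [h] at h'; exact absurd h' (by simp)
          obtain ⟨j, hj, hne⟩ := hmm
          apply Bool.or_eq_true_iff.mpr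
          rcases Nat.lt_or_ge (j : ℕ) i with hlt | hge
          · left; exact decide_eq_true ⟨j, hlt, hne⟩
          · right
            have hji : j = (⟨i, Nat.lt_of_succ_lt h1⟩ : Fin n) := by
              apply Fin.ext; simp; omega
            rw [hji] at hne
            rw [hti] at hne
            cases hfb : f ⟨i, Nat.lt_of_succ_lt h1⟩
            · simp
            · rw [hfb] at hne; exact absurd rfl hne
        · rintro ⟨hti, hx0, hx1⟩
          have hmm : ∃ j : Fin n, (j : ℕ) < i + 1 ∧ τ j ≠ f j := by
            rcases Bool.or_eq_true_iff.mp hx0 with h | h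
            · exact of_decide_eq_true h
            · rcases Bool.or_eq_true_iff.mp hx1 with h' | h'
              · exact of_decide_eq_true h'
              · simp at h'; rw [h] at h'; exact absurd h' (by simp)
          obtain ⟨j, hj, hne⟩ := hmm
          apply Bool.or_eq_true_iff.mpr
          rcases Nat.lt_or_ge (j : ℕ) i with hlt | hge
          · left; exact decide_eq_true ⟨j, hlt, hne⟩
          · right
            have hji : j = (⟨i, Nat.lt_of_succ_lt h1⟩ : Fin n) := by
              apply Fin.ext; simp; omega
            rw [hji] at hne
            rw [hti] at hne
            cases hfb : f ⟨i, Nat.lt_of_succ_lt h1⟩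
            · rw [hfb] at hne; exact absurd rfl hne
            · rfl
      · have hdchar : ∀ b : Bool, (!decide (∀ c ∈ cls, ∃ k : Fin 3, τ (c k).1 = (c k).2)) = true →
            τ ⟨n - 1, Nat.sub_lt hn Nat.one_pos⟩ = b →
            (decide (∃ j : Fin n, (j : ℕ) < n - 1 ∧ τ j ≠ f j)
              || (if b = true then !(f ⟨n - 1, Nat.sub_lt hn Nat.one_pos⟩)
                  else f ⟨n - 1, Nat.sub_lt hn Nat.one_pos⟩)) = true := by
          intro b hd htb
          have hfalse : ¬ ∀ c ∈ cls, ∃ k : Fin 3, τ (c k).1 = (c k).2 := by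
            simpa using hd
          have hτf : ∃ j : Fin n, τ j ≠ f j := by
            by_contra hcon
            push_neg at hcon
            have : (fun j => τ j) = f := funext hcon
            apply hfalse
            intro c hc
            obtain ⟨k, hk⟩ := hf c hc
            exact ⟨k, by rw [hcon]; exact hk⟩
          obtain ⟨j, hne⟩ := hτf
          apply Bool.or_eq_true_iff.mpr
          rcases Nat.lt_or_ge (j : ℕ) (n - 1) with hlt | hge
          · left; exact decide_eq_true ⟨j, hlt, hne⟩
          · right
            have hji : j = (⟨n - 1, Nat.sub_lt hn Nat.one_pos⟩ : Fin n) := by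
              apply Fin.ext; simp; omega
            rw [hji, htb] at hne
            cases b
            · simp only [Bool.false_eq_true, if_false]
              cases hfb : f ⟨n - 1, Nat.sub_lt hn Nat.one_pos⟩
              · rw [hfb] at hne; exact absurd rfl hne
              · rfl
            · simp only [if_true]
              cases hfb : f ⟨n - 1, Nat.sub_lt hn Nat.one_pos⟩
              · simp
              · rw [hfb] at hne; exact absurd rfl hne
        constructor
        · rintro ⟨htb, hd⟩
          have := hdchar true hd htb
          simpa using this
        · rintro ⟨htb, hd⟩
          have := hdchar false hd htb
          simpa using this
      · intro c hc
        by_cases hall : ∀ c ∈ cls, ∃ k : Fin 3, τ (c k).1 = (c k).2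
        · obtain ⟨k, hk⟩ := hall c hc
          fin_cases k
          · exact Or.inl hk
          · exact Or.inr (Or.inl hk)
          · exact Or.inr (Or.inr (Or.inl hk))
        · refine Or.inr (Or.inr (Or.inr ?_))
          simp [hall]
  · -- backward: formula true ⇒ satisfiable
    rintro ⟨X0, X1, dF, hdep, hτ⟩
    by_contra hns
    push_neg at hns
    have hd : ∀ τ, dF τ = true := by
      intro τ
      obtain ⟨c, hc, hk⟩ := hns τ
      rcases (hτ τ).2.2.2 c hc with h | h | h | h
      · exact absurd h (hk 0)
      · exact absurd h (hk 1)
      · exact absurd h (hk 2)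
      · exact h
    have key : ∀ k, k ≤ n - 1 → ∀ τ,
        X0 ⟨n - 1 - k, by omega⟩ τ = true ∧ X1 ⟨n - 1 - k, by omega⟩ τ = true := by
      intro k
      induction k with
      | zero =>
        intro _ τ
        have base : ∀ (b : Bool), ∀ τ : Fin n → Bool,
            τ ⟨n - 1, Nat.sub_lt hn Nat.one_pos⟩ = b →
            (if b = true then X1 ⟨n - 1, Nat.sub_lt hn Nat.one_pos⟩ τ
             else X0 ⟨n - 1, Nat.sub_lt hn Nat.one_pos⟩ τ) = true := by
          intro b τ htb
          cases b
          · simpa using ((hτ τ).2.2.1).2 ⟨htb, hd τ⟩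
          · simpa using ((hτ τ).2.2.1).1 ⟨htb, hd τ⟩
        have hidx : (⟨n - 1 - 0, by omega⟩ : Fin n) = ⟨n - 1, Nat.sub_lt hn Nat.one_pos⟩ := by
          apply Fin.ext; simp
        rw [hidx]
        set i : Fin n := ⟨n - 1, Nat.sub_lt hn Nat.one_pos⟩ with hi
        constructor
        · set τ' := Function.update τ i false with hτ'
          have hb := base false τ' (by simp [τ'])
          simp only [Bool.false_eq_true, if_false] at hb
          have hag : ∀ j : Fin n, (j : ℕ) < (i : ℕ) → τ j = τ' j := by
            intro j hj
            have : j ≠ i := by intro h; rw [h] at hj; omega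
            simp [τ', Function.update_of_ne this]
          rw [(hdep i τ τ' hag).1]; exact hb
        · set τ' := Function.update τ i true with hτ'
          have hb := base true τ' (by simp [τ'])
          simp only [if_true] at hb
          have hag : ∀ j : Fin n, (j : ℕ) < (i : ℕ) → τ j = τ' j := by
            intro j hj
            have : j ≠ i := by intro h; rw [h] at hj; omega
            simp [τ', Function.update_of_ne this]
          rw [(hdep i τ τ' hag).2]; exact hb
      | succ k ih =>
        intro hk τ
        have hk' : k ≤ n - 1 := by omega
        have h1 : (n - 1 - (k + 1)) + 1 < n := by omega
        have hidx : (⟨n - 1 - k, by omega⟩ : Fin n) = ⟨(n - 1 - (k + 1)) + 1, h1⟩ := by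
          apply Fin.ext; simp; omega
        set i : Fin n := ⟨n - 1 - (k + 1), Nat.lt_of_succ_lt h1⟩ with hi
        constructor
        · set τ' := Function.update τ i false with hτ'
          obtain ⟨h0, h1'⟩ := ih hk' τ'
          rw [hidx] at h0 h1'
          have hb := (((hτ τ').2.1) (n - 1 - (k + 1)) h1).2
            ⟨by simp [τ', hi], h0, h1'⟩
          have hag : ∀ j : Fin n, (j : ℕ) < (i : ℕ) → τ j = τ' j := by
            intro j hj
            have : j ≠ i := by intro h; rw [h] at hj; omega
            simp [τ', Function.update_of_ne this]
          rw [(hdep i τ τ' hag).1]; exact hb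
        · set τ' := Function.update τ i true with hτ'
          obtain ⟨h0, h1'⟩ := ih hk' τ'
          rw [hidx] at h0 h1'
          have hb := (((hτ τ').2.1) (n - 1 - (k + 1)) h1).1
            ⟨by simp [τ', hi], h0, h1'⟩
          have hag : ∀ j : Fin n, (j : ℕ) < (i : ℕ) → τ j = τ' j := by
            intro j hj
            have : j ≠ i := by intro h; rw [h] at hj; omega
            simp [τ', Function.update_of_ne this]
          rw [(hdep i τ τ' hag).2]; exact hb
    have hfin := key (n - 1) le_rfl (fun _ => false)
    have hidx0 : (⟨n - 1 - (n - 1), by omega⟩ : Fin n) = ⟨0, hn⟩ := by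
      apply Fin.ext; simp
    rw [hidx0] at hfin
    exact ((hτ (fun _ => false)).1) hfin
end
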